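/- arXiv:2505.01669 — 2 statements merged into one kernel-verified Lean document; each statement's English description precedes it below -/
import Mathlib

section
/- Let n ≥ 3 and let X₁, …, Xₙ be vectors in ℝᵖ (or any real inner product space), with sample mean X̄ = n⁻¹ Σᵢ₌₁ⁿ Xᵢ. Then (n−1)⁻¹ Σⱼ₌₁ⁿ ⟨Xⱼ, Xⱼ⟩ − n(n−1)⁻¹ ⟨X̄, X̄⟩ = [n(n−1)(n−2)]⁻¹ Σ_{i,j,k pairwise distinct} ⟨Xᵢ − Xⱼ, Xₖ − Xⱼ⟩, where the last sum ranges over all ordered triples (i,j,k) of pairwise distinct indices in {1,…,n}. -/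
/-!
Write `S = ∑ Xᵢ`, `T = ∑ ⟪Xᵢ, Xᵢ⟫` and `Q = ⟪S, S⟫`. A term of the U-statistic with `i = j` or
`j = k` vanishes anyway, so the sum over distinct triples is the sum over all triples minus the
diagonal `i = k`. Summing over `i` and `k` first, the full sum is `∑ⱼ ‖S - n Xⱼ‖² = n (n T - Q)`,
and the diagonal is `∑ᵢⱼ ‖Xᵢ - Xⱼ‖² = 2 (n T - Q)`. Hence the U-statistic is
`(n - 2) (n T - Q) / (n (n - 1) (n - 2))`, which is the plug-in estimator `(n T - Q) / (n (n - 1))`.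
-/

open scoped RealInnerProductSpace

section

variable {ι E : Type*} [NormedAddCommGroup E] [InnerProductSpace ℝ E]

theorem ite_pairwise_ne_inner_sub_sub [DecidableEq ι] (X : ι → E) (i j k : ι) :
    (if i ≠ j ∧ j ≠ k ∧ i ≠ k then ⟪X i - X j, X k - X j⟫ else 0) =
      ⟪X i - X j, X k - X j⟫ - if i = k then ⟪X i - X j, X i - X j⟫ else 0 := by
  by_cases hij : i = j
  · subst hij; simp
  by_cases hjk : j = k
  · subst hjk; simp [hij]
  by_cases hik : i = k
  · subst hik; simp
  · simp [hij, hjk, hik]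

variable [Fintype ι]

theorem sum_sum_sum_inner_sub_sub (X : ι → E) :
    ∑ i, ∑ j, ∑ k, ⟪X i - X j, X k - X j⟫ =
      Fintype.card ι * (Fintype.card ι * ∑ i, ⟪X i, X i⟫ - ⟪∑ i, X i, ∑ i, X i⟫) := by
  set n := Fintype.card ι
  have h_centre (j : ι) : ∑ i, (X i - X j) = ∑ i, X i - (n : ℝ) • X j := by
    rw [Finset.sum_sub_distrib, Finset.sum_const, Finset.card_univ, Nat.cast_smul_eq_nsmul]
  calc ∑ i, ∑ j, ∑ k, ⟪X i - X j, X k - X j⟫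
      = ∑ j, ⟪∑ i, (X i - X j), ∑ k, (X k - X j)⟫ := by
        refine Finset.sum_comm.trans (Finset.sum_congr rfl fun j _ => ?_)
        rw [sum_inner]
        simp only [inner_sum]
    _ = ∑ j, (⟪∑ i, X i, ∑ i, X i⟫ - 2 * n * ⟪∑ i, X i, X j⟫ + n ^ 2 * ⟪X j, X j⟫) := by
        refine Finset.sum_congr rfl fun j _ => ?_
        rw [h_centre, inner_sub_left, inner_sub_right, inner_sub_right, real_inner_smul_left,
          real_inner_smul_left, real_inner_smul_right, real_inner_smul_right, real_inner_comm (X j)]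
        ring
    _ = _ := by
        simp only [Finset.sum_add_distrib, Finset.sum_sub_distrib, ← Finset.mul_sum,
          Finset.sum_const, Finset.card_univ, nsmul_eq_mul]
        rw [← inner_sum]
        ring

theorem sum_sum_inner_sub_sub_self (X : ι → E) :
    ∑ i, ∑ j, ⟪X i - X j, X i - X j⟫ =
      2 * (Fintype.card ι * ∑ i, ⟪X i, X i⟫ - ⟪∑ i, X i, ∑ i, X i⟫) := by
  simp only [inner_sub_left, inner_sub_right, Finset.sum_sub_distrib, Finset.sum_const,
    Finset.card_univ, nsmul_eq_mul, ← Finset.mul_sum, ← inner_sum, ← sum_inner]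
  rw [real_inner_comm]
  ring

theorem sum_pairwise_ne_inner_sub_sub [DecidableEq ι] (X : ι → E) :
    ∑ i, ∑ j, ∑ k, (if i ≠ j ∧ j ≠ k ∧ i ≠ k then ⟪X i - X j, X k - X j⟫ else 0) =
      (Fintype.card ι - 2) * (Fintype.card ι * ∑ i, ⟪X i, X i⟫ - ⟪∑ i, X i, ∑ i, X i⟫) := by
  simp only [ite_pairwise_ne_inner_sub_sub, Finset.sum_sub_distrib, Finset.sum_ite_eq,
    Finset.mem_univ, if_true]
  rw [sum_sum_sum_inner_sub_sub, sum_sum_inner_sub_sub_self]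
  ring

end

/-- The plug-in estimator of `tr Ξ` based on the sample mean coincides with a third-order
U-statistic: for `n ≥ 3` vectors `X₁, …, Xₙ` in a real inner product space, with sample mean
`X̄ = n⁻¹ ∑ᵢ Xᵢ`,
`(n-1)⁻¹ ∑ⱼ ⟨Xⱼ, Xⱼ⟩ - n (n-1)⁻¹ ⟨X̄, X̄⟩
  = (n(n-1)(n-2))⁻¹ ∑_{i,j,k pairwise distinct} ⟨Xᵢ - Xⱼ, Xₖ - Xⱼ⟩`. -/
theorem sample_trace_estimator_eq_ustatistic
    {E : Type*} [NormedAddCommGroup E] [InnerProductSpace ℝ E]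
    (n : ℕ) (hn : 3 ≤ n) (X : Fin n → E) :
    ((n : ℝ) - 1)⁻¹ * ∑ j, ⟪X j, X j⟫
        - (n : ℝ) * ((n : ℝ) - 1)⁻¹ *
          ⟪(n : ℝ)⁻¹ • ∑ i, X i, (n : ℝ)⁻¹ • ∑ i, X i⟫
      = ((n : ℝ) * ((n : ℝ) - 1) * ((n : ℝ) - 2))⁻¹ *
          ∑ i, ∑ j, ∑ k,
            if i ≠ j ∧ j ≠ k ∧ i ≠ k then ⟪X i - X j, X k - X j⟫ else 0 := by
  have hn_cast : (3 : ℝ) ≤ n := by exact_mod_cast hn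
  have hn_ne_zero : (n : ℝ) ≠ 0 := by linarith
  have hn_sub_one : (n : ℝ) - 1 ≠ 0 := by linarith
  have hn_sub_two : (n : ℝ) - 2 ≠ 0 := by linarith
  rw [sum_pairwise_ne_inner_sub_sub, Fintype.card_fin, real_inner_smul_left,
    real_inner_smul_right]
  field_simp
end

section
/- Let u be a random vector uniformly distributed on the unit sphere S^{p−1} = {x ∈ ℝᵖ : ‖x‖ = 1}, and let A be a fixed p×p real symmetric matrix. Then E[(uᵀ A u)²] = (2‖A‖_F² + (tr A)²)/(p(p+2)), and consequently Var(uᵀ A u) = 2(p‖A‖_F² − (tr A)²)/(p²(p+2)), where ‖A‖_F denotes the Frobenius norm. -/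
/-!
Orthogonal invariance, applied to the Householder reflection exchanging `x` and `y`, shows that
`x ⬝ᵥ u` and `y ⬝ᵥ u` have the same law whenever `‖x‖ = ‖y‖`. Hence all `E[u_i²]` are equal to
`1/p`, and since `u_i + u_j` and `u_i - u_j` are both distributed as `√2 u_i`, adding their fourth
moments gives `E[u_i⁴] = 3 E[u_i² u_j²]` for `i ≠ j`. Integrating `∑_j u_i² u_j² = u_i²` then
yields `E[u_i² u_j²] = (1 + 2 δ_ij) / (p (p + 2))`. Finally `A = O diag(λ) Oᵀ` with `O` orthogonal,
`v = Oᵀ u` is again uniform on the sphere, `uᵀ A u = ∑ λ_i v_i²`, `tr A = ∑ λ_i` and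
`‖A‖_F² = ∑ λ_i²`.
-/

open MeasureTheory Matrix ProbabilityTheory

namespace Matrix

variable {ι : Type*} [Fintype ι] [DecidableEq ι]

/-- For `w = 0` this is `1`, since `2 / 0 = 0`. -/
noncomputable def householder (w : ι → ℝ) : Matrix ι ι ℝ :=
  1 - (2 / (w ⬝ᵥ w)) • vecMulVec w w

theorem transpose_householder (w : ι → ℝ) : (householder w)ᵀ = householder w := by
  simp [householder]

theorem householder_mul_self (w : ι → ℝ) : householder w * householder w = 1 := by
  have hc : 2 / (w ⬝ᵥ w) * (2 / (w ⬝ᵥ w)) * (w ⬝ᵥ w) = 2 * (2 / (w ⬝ᵥ w)) := by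
    rcases eq_or_ne (w ⬝ᵥ w) 0 with h | h
    · simp [h]
    · field_simp
  simp only [householder, sub_mul, mul_sub, one_mul, mul_one, smul_mul_smul_comm,
    vecMulVec_mul_vecMulVec, vecMulVec_smul, smul_smul, hc]
  module

theorem householder_mem_orthogonalGroup (w : ι → ℝ) :
    householder w ∈ orthogonalGroup ι ℝ := by
  rw [mem_orthogonalGroup_iff', transpose_householder, householder_mul_self]

theorem householder_mulVec (w x : ι → ℝ) :
    householder w *ᵥ x = x - (2 * (w ⬝ᵥ x) / (w ⬝ᵥ w)) • w := by
  rw [householder, sub_mulVec, one_mulVec, smul_mulVec, vecMulVec_mulVec, op_smul_eq_smul,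
    smul_smul, div_mul_eq_mul_div]

theorem householder_sub_mulVec {x y : ι → ℝ} (h : x ⬝ᵥ x = y ⬝ᵥ y) :
    householder (x - y) *ᵥ x = y := by
  have hw : (x - y) ⬝ᵥ (x - y) = 2 * ((x - y) ⬝ᵥ x) := by
    simp only [sub_dotProduct, dotProduct_sub, dotProduct_comm y x, h]
    ring
  rcases eq_or_ne ((x - y) ⬝ᵥ x) 0 with h0 | h0
  · rw [h0, mul_zero, dotProduct_self_eq_zero, sub_eq_zero] at hw
    simp [hw, householder]
  · rw [householder_mulVec, hw, div_self (by positivity), one_smul, sub_sub_cancel]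

theorem sum_mulVec_sq_of_mem_orthogonalGroup {O : Matrix ι ι ℝ}
    (hO : O ∈ orthogonalGroup ι ℝ) (x : ι → ℝ) :
    ∑ i, (O *ᵥ x) i ^ 2 = ∑ i, x i ^ 2 := by
  simp only [sq]
  change (O *ᵥ x) ⬝ᵥ (O *ᵥ x) = x ⬝ᵥ x
  rw [dotProduct_mulVec, vecMul_mulVec, ← mulVec_transpose, (mem_orthogonalGroup_iff' ..).1 hO,
    transpose_one, one_mulVec]

omit [DecidableEq ι] in
theorem measurable_mulVec (M : Matrix ι ι ℝ) : Measurable (M *ᵥ · : (ι → ℝ) → ι → ℝ) :=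
  (continuous_const.matrix_mulVec continuous_id).measurable

omit [DecidableEq ι] in
theorem measurable_dotProduct_left (x : ι → ℝ) : Measurable (x ⬝ᵥ · : (ι → ℝ) → ℝ) :=
  (continuous_const.dotProduct continuous_id).measurable

namespace IsHermitian

variable {A : Matrix ι ι ℝ}

theorem dotProduct_mulVec_eq_sum_eigenvalues_mul_sq (hA : A.IsHermitian) (x : ι → ℝ) :
    x ⬝ᵥ A *ᵥ x
      = ∑ i, hA.eigenvalues i * ((star (hA.eigenvectorUnitary : Matrix ι ι ℝ)) *ᵥ x) i ^ 2 := by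
  conv_lhs => rw [hA.spectral_theorem]
  rw [Unitary.conjStarAlgAut_apply, ← mulVec_mulVec, ← mulVec_mulVec, dotProduct_mulVec,
    ← mulVec_transpose]
  simp [dotProduct, mulVec_diagonal, sq, mul_left_comm, star_eq_conjTranspose]

theorem sum_sum_sq_eq_sum_eigenvalues_sq (hA : A.IsHermitian) :
    ∑ i, ∑ j, A i j ^ 2 = ∑ i, hA.eigenvalues i ^ 2 := by
  have htrace : (A * A).trace = ∑ i, ∑ j, A i j ^ 2 := by
    simp only [trace, diag_apply, mul_apply, sq]
    refine Finset.sum_congr rfl fun i _ => Finset.sum_congr rfl fun j _ => ?_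
    rw [← hA.apply j i, star_trivial]
  rw [← htrace]
  conv_lhs => rw [hA.spectral_theorem, ← map_mul, Unitary.conjStarAlgAut_apply, trace_mul_cycle,
    Unitary.coe_star_mul_self, one_mul, diagonal_mul_diagonal, trace_diagonal]
  simp [sq]

end IsHermitian

end Matrix

theorem mem_closedBall_zero_of_sum_sq_eq_one {ι : Type*} [Fintype ι] {x : ι → ℝ}
    (hx : ∑ i, x i ^ 2 = 1) : x ∈ Metric.closedBall 0 1 := by
  rw [mem_closedBall_zero_iff, pi_norm_le_iff_of_nonneg zero_le_one]
  intro i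
  rw [Real.norm_eq_abs, ← sq_le_one_iff_abs_le_one, ← hx]
  exact Finset.single_le_sum (fun j _ => sq_nonneg (x j)) (Finset.mem_univ i)

structure IsUniformOnSphere {Ω ι : Type*} [MeasurableSpace Ω] [Fintype ι] [DecidableEq ι]
    (P : Measure Ω) (u : Ω → ι → ℝ) : Prop where
  measurable : Measurable u
  ae_sum_sq : ∀ᵐ ω ∂P, ∑ i, (u ω i) ^ 2 = 1
  map_mulVec : ∀ O : orthogonalGroup ι ℝ,
    P.map (fun ω => (O : Matrix ι ι ℝ) *ᵥ u ω) = P.map u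

namespace IsUniformOnSphere

variable {Ω ι : Type*} [MeasurableSpace Ω] [Fintype ι] [DecidableEq ι]
  {P : Measure Ω} {u : Ω → ι → ℝ}

theorem mulVec (hu : IsUniformOnSphere P u) {O : Matrix ι ι ℝ}
    (hO : O ∈ orthogonalGroup ι ℝ) : IsUniformOnSphere P (fun ω => O *ᵥ u ω) where
  measurable := (measurable_mulVec O).comp hu.measurable
  ae_sum_sq := by
    filter_upwards [hu.ae_sum_sq] with ω hω
    rw [sum_mulVec_sq_of_mem_orthogonalGroup hO, hω]
  map_mulVec O' := by
    simp only [mulVec_mulVec]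
    rw [hu.map_mulVec ⟨O' * O, mul_mem O'.2 hO⟩, hu.map_mulVec ⟨O, hO⟩]

theorem identDistrib_dotProduct (hu : IsUniformOnSphere P u) {x y : ι → ℝ}
    (h : x ⬝ᵥ x = y ⬝ᵥ y) :
    IdentDistrib (fun ω => x ⬝ᵥ u ω) (fun ω => y ⬝ᵥ u ω) P P where
  aemeasurable_fst := (measurable_dotProduct_left x).comp_aemeasurable hu.measurable.aemeasurable
  aemeasurable_snd := (measurable_dotProduct_left y).comp_aemeasurable hu.measurable.aemeasurable
  map_eq := by
    have hH : ∀ v, x ⬝ᵥ householder (x - y) *ᵥ v = y ⬝ᵥ v := fun v => by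
      rw [dotProduct_mulVec, ← transpose_householder, vecMul_transpose, householder_sub_mulVec h]
    have hx := Measure.map_map (μ := P) (measurable_dotProduct_left x) hu.measurable
    have hxH := Measure.map_map (μ := P) (measurable_dotProduct_left x)
      ((measurable_mulVec (householder (x - y))).comp hu.measurable)
    simp only [Function.comp_def, hH] at hx hxH
    rw [← hx, ← hxH, hu.map_mulVec ⟨_, householder_mem_orthogonalGroup (x - y)⟩]

theorem integral_apply_pow_eq (hu : IsUniformOnSphere P u) (i j : ι) (k : ℕ) :
    ∫ ω, u ω i ^ k ∂P = ∫ ω, u ω j ^ k ∂P := by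
  have h := ((hu.identDistrib_dotProduct (x := Pi.single i 1) (y := Pi.single j 1)
    (by simp)).comp (measurable_id.pow_const k)).integral_eq
  simpa [Function.comp_def] using h

theorem integral_dotProduct_pow_two_mul (hu : IsUniformOnSphere P u) (x : ι → ℝ) (i : ι)
    (k : ℕ) :
    ∫ ω, (x ⬝ᵥ u ω) ^ (2 * k) ∂P = (x ⬝ᵥ x) ^ k * ∫ ω, u ω i ^ (2 * k) ∂P := by
  have hx : 0 ≤ x ⬝ᵥ x := by simpa using dotProduct_star_self_nonneg x
  have hy : x ⬝ᵥ x = (√(x ⬝ᵥ x) • Pi.single i 1) ⬝ᵥ (√(x ⬝ᵥ x) • Pi.single i 1) := by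
    simp [← sq, Real.sq_sqrt hx]
  have h := ((hu.identDistrib_dotProduct hy).comp (measurable_id.pow_const (2 * k))).integral_eq
  simp only [Function.comp_def, id] at h
  rw [h]
  simp only [smul_dotProduct, single_one_dotProduct, smul_eq_mul, mul_pow, pow_mul,
    Real.sq_sqrt hx, integral_const_mul]

variable [IsProbabilityMeasure P]

theorem nonempty (hu : IsUniformOnSphere P u) : Nonempty ι := by
  obtain ⟨ω, hω⟩ := hu.ae_sum_sq.exists
  by_contra h
  simp [not_nonempty_iff.1 h] at hω

theorem integrable_comp (hu : IsUniformOnSphere P u) {g : (ι → ℝ) → ℝ} (hg : Continuous g) :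
    Integrable (fun ω => g (u ω)) P := by
  obtain ⟨C, hC⟩ := (isCompact_closedBall (0 : ι → ℝ) 1).exists_bound_of_continuousOn
    hg.continuousOn
  refine Integrable.of_bound (hg.measurable.comp hu.measurable).aestronglyMeasurable C ?_
  filter_upwards [hu.ae_sum_sq] with ω hω
  exact hC _ (mem_closedBall_zero_of_sum_sq_eq_one hω)

theorem integral_sq_apply (hu : IsUniformOnSphere P u) (i : ι) :
    ∫ ω, u ω i ^ 2 ∂P = 1 / Fintype.card ι := by
  have : Nonempty ι := ⟨i⟩
  have hsum : ∑ j, ∫ ω, u ω j ^ 2 ∂P = 1 := by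
    rw [← integral_finsetSum _ fun j _ => hu.integrable_comp (g := fun x => x j ^ 2) (by fun_prop),
      integral_congr_ae hu.ae_sum_sq, integral_const, probReal_univ, one_smul]
  simp only [hu.integral_apply_pow_eq _ i, Finset.sum_const, Finset.card_univ,
    nsmul_eq_mul] at hsum
  rw [eq_div_iff (by simp [Fintype.card_ne_zero]), mul_comm, hsum]

theorem integral_pow_four_eq_three_mul (hu : IsUniformOnSphere P u) {i j : ι} (hij : i ≠ j) :
    ∫ ω, u ω i ^ 4 ∂P = 3 * ∫ ω, u ω i ^ 2 * u ω j ^ 2 ∂P := by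
  have hplus := hu.integral_dotProduct_pow_two_mul (Pi.single i 1 + Pi.single j 1) i 2
  have hminus := hu.integral_dotProduct_pow_two_mul (Pi.single i 1 - Pi.single j 1) i 2
  simp only [add_dotProduct, sub_dotProduct, dotProduct_add, dotProduct_sub,
    single_one_dotProduct, Pi.single_apply, hij, hij.symm] at hplus hminus
  norm_num at hplus hminus
  have hi := hu.integrable_comp (g := fun x => x i ^ 4) (by fun_prop)
  have hj := hu.integrable_comp (g := fun x => x j ^ 4) (by fun_prop)
  have hij2 := hu.integrable_comp (g := fun x => x i ^ 2 * x j ^ 2) (by fun_prop)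
  have hp := hu.integrable_comp (g := fun x => (x i + x j) ^ 4) (by fun_prop)
  have hm := hu.integrable_comp (g := fun x => (x i - x j) ^ 4) (by fun_prop)
  have key : 8 * ∫ ω, u ω i ^ 4 ∂P
      = 2 * ∫ ω, u ω i ^ 4 ∂P + 12 * ∫ ω, u ω i ^ 2 * u ω j ^ 2 ∂P
        + 2 * ∫ ω, u ω j ^ 4 ∂P := by
    calc 8 * ∫ ω, u ω i ^ 4 ∂P
        = ∫ ω, (u ω i + u ω j) ^ 4 ∂P + ∫ ω, (u ω i - u ω j) ^ 4 ∂P := by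
          rw [hplus, hminus]; ring
      _ = ∫ ω, ((u ω i + u ω j) ^ 4 + (u ω i - u ω j) ^ 4) ∂P := (integral_add hp hm).symm
      _ = ∫ ω, (2 * u ω i ^ 4 + 12 * (u ω i ^ 2 * u ω j ^ 2) + 2 * u ω j ^ 4) ∂P := by
          congr with ω; ring
      _ = _ := by
          have hsum : Integrable (fun ω => 2 * u ω i ^ 4 + 12 * (u ω i ^ 2 * u ω j ^ 2)) P :=
            (hi.const_mul 2).add (hij2.const_mul 12)
          rw [integral_add hsum (hj.const_mul 2),
            integral_add (hi.const_mul 2) (hij2.const_mul 12),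
            integral_const_mul, integral_const_mul, integral_const_mul]
  rw [hu.integral_apply_pow_eq j i] at key
  linarith

theorem sum_integral_sq_mul_sq (hu : IsUniformOnSphere P u) (i : ι) :
    ∑ j, ∫ ω, u ω i ^ 2 * u ω j ^ 2 ∂P = 1 / Fintype.card ι := by
  rw [← integral_finsetSum _ fun j _ =>
      hu.integrable_comp (g := fun x => x i ^ 2 * x j ^ 2) (by fun_prop),
    ← hu.integral_sq_apply i]
  refine integral_congr_ae ?_
  filter_upwards [hu.ae_sum_sq] with ω hω
  rw [← Finset.mul_sum, hω, mul_one]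

theorem integral_sq_mul_sq (hu : IsUniformOnSphere P u) (i j : ι) :
    ∫ ω, u ω i ^ 2 * u ω j ^ 2 ∂P
      = (if i = j then 3 else 1) / (Fintype.card ι * (Fintype.card ι + 2) : ℝ) := by
  set n : ℝ := (Fintype.card ι : ℝ)
  set c := (∫ ω, u ω i ^ 4 ∂P) / 3 with hc_def
  have hrow : ∀ k, ∫ ω, u ω i ^ 2 * u ω k ^ 2 ∂P = (if i = k then 3 else 1) * c := by
    intro k
    split_ifs with hik
    · simp only [← hik, ← pow_add, hc_def]
      ring
    · rw [one_mul, hc_def, hu.integral_pow_four_eq_three_mul hik,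
        mul_div_cancel_left₀ _ three_ne_zero]
  have hcount : ∑ k, (if i = k then (3 : ℝ) else 1) = n + 2 := by
    have h : ∀ k, (if i = k then (3 : ℝ) else 1) = 1 + if i = k then 2 else 0 := by
      intro k; split_ifs <;> norm_num
    simp only [h, Finset.sum_add_distrib, Finset.sum_ite_eq, Finset.mem_univ, if_true,
      Finset.sum_const, Finset.card_univ, nsmul_eq_mul, mul_one, n]
  have hc : c = 1 / (n * (n + 2)) := by
    have h := hu.sum_integral_sq_mul_sq i
    simp only [hrow, ← Finset.sum_mul, hcount] at h
    have : 0 < n := by simp [n, Fintype.card_pos_iff.2 ⟨i⟩]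
    rw [eq_div_iff (by positivity)]
    rw [eq_div_iff this.ne'] at h
    linear_combination h
  rw [hrow, hc]
  ring

theorem integral_sum_mul_sq (hu : IsUniformOnSphere P u) (c : ι → ℝ) :
    ∫ ω, ∑ i, c i * u ω i ^ 2 ∂P = (∑ i, c i) / Fintype.card ι := by
  rw [integral_finsetSum _ fun i _ =>
      (hu.integrable_comp (g := fun x => x i ^ 2) (by fun_prop)).const_mul (c i),
    Finset.sum_div]
  simp only [integral_const_mul, hu.integral_sq_apply, mul_one_div]

theorem integral_sum_mul_sq_sq (hu : IsUniformOnSphere P u) (c : ι → ℝ) :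
    ∫ ω, (∑ i, c i * u ω i ^ 2) ^ 2 ∂P
      = (2 * ∑ i, c i ^ 2 + (∑ i, c i) ^ 2) / (Fintype.card ι * (Fintype.card ι + 2)) := by
  have hexpand : ∀ ω, (∑ i, c i * u ω i ^ 2) ^ 2
      = ∑ i, ∑ j, c i * c j * (u ω i ^ 2 * u ω j ^ 2) := fun ω => by
    rw [sq, Finset.sum_mul_sum]
    exact Finset.sum_congr rfl fun i _ => Finset.sum_congr rfl fun j _ => by ring
  have hint : ∀ i j, Integrable (fun ω => c i * c j * (u ω i ^ 2 * u ω j ^ 2)) P := fun i j =>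
    (hu.integrable_comp (g := fun x => x i ^ 2 * x j ^ 2) (by fun_prop)).const_mul _
  have hcount : ∑ i, ∑ j, c i * c j * (if i = j then 3 else 1)
      = 2 * ∑ i, c i ^ 2 + (∑ i, c i) ^ 2 := by
    have h : ∀ i j, c i * c j * (if i = j then (3 : ℝ) else 1)
        = c i * c j + if i = j then 2 * c i * c j else 0 := by
      intro i j; split_ifs <;> ring
    simp only [h, Finset.sum_add_distrib, Finset.sum_ite_eq, Finset.mem_univ, if_true]
    rw [sq, Finset.sum_mul_sum, Finset.mul_sum, add_comm]
    simp only [sq, mul_assoc]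
  simp only [hexpand]
  rw [integral_finsetSum _ fun i _ => integrable_finsetSum _ fun j _ => hint i j]
  simp only [integral_finsetSum _ fun j _ => hint _ j, integral_const_mul, hu.integral_sq_mul_sq,
    mul_div_assoc', ← Finset.sum_div, hcount]

theorem integral_sum_mul_sq_sq_sub_sq (hu : IsUniformOnSphere P u) (c : ι → ℝ) :
    ∫ ω, (∑ i, c i * u ω i ^ 2) ^ 2 ∂P - (∫ ω, ∑ i, c i * u ω i ^ 2 ∂P) ^ 2
      = 2 * (Fintype.card ι * ∑ i, c i ^ 2 - (∑ i, c i) ^ 2)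
        / (Fintype.card ι ^ 2 * (Fintype.card ι + 2)) := by
  have : 0 < (Fintype.card ι : ℝ) := Nat.cast_pos.2 (Fintype.card_pos_iff.2 hu.nonempty)
  rw [hu.integral_sum_mul_sq_sq, hu.integral_sum_mul_sq]
  field_simp
  ring

end IsUniformOnSphere

theorem second_moment_quadratic_form_uniform_sphere_general {p : ℕ}
    {Ω : Type*} [MeasurableSpace Ω] (P : Measure Ω) [IsProbabilityMeasure P]
    (u : Ω → Fin p → ℝ) (hu : Measurable u)
    (hsphere : ∀ᵐ ω ∂P, ∑ i, (u ω i) ^ 2 = 1)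
    (hrot : ∀ O : Matrix.orthogonalGroup (Fin p) ℝ,
      Measure.map (fun ω => (O : Matrix (Fin p) (Fin p) ℝ).mulVec (u ω)) P
        = Measure.map u P)
    (A : Matrix (Fin p) (Fin p) ℝ) (hA : A.IsSymm) :
    (∫ ω, ((u ω) ⬝ᵥ A.mulVec (u ω)) ^ 2 ∂P
        = (2 * ∑ i, ∑ j, (A i j) ^ 2 + A.trace ^ 2) / (p * (p + 2)))
    ∧ (∫ ω, ((u ω) ⬝ᵥ A.mulVec (u ω)) ^ 2 ∂P
          - (∫ ω, (u ω) ⬝ᵥ A.mulVec (u ω) ∂P) ^ 2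
        = 2 * ((p : ℝ) * ∑ i, ∑ j, (A i j) ^ 2 - A.trace ^ 2) / (p ^ 2 * (p + 2))) := by
  have hA' : A.IsHermitian := isHermitian_iff_isSymm.2 hA
  have hv := IsUniformOnSphere.mulVec ⟨hu, hsphere, hrot⟩
    (Unitary.star_mem hA'.eigenvectorUnitary.2)
  simp only [hA'.dotProduct_mulVec_eq_sum_eigenvalues_mul_sq]
  rw [hv.integral_sum_mul_sq_sq_sub_sq, hv.integral_sum_mul_sq_sq,
    hA'.sum_sum_sq_eq_sum_eigenvalues_sq, hA'.trace_eq_sum_eigenvalues]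
  simp

/-- **Lemma 11 (second moment and variance).** If `u` is a random vector uniformly distributed
on the unit sphere `S^{p-1}` (i.e. `u` takes values in the unit sphere and its law is invariant
under every orthogonal transformation, which characterizes the uniform distribution on the
sphere), then for any fixed `p × p` real symmetric matrix `A`,
`E[(uᵀ A u)²] = (2‖A‖_F² + (tr A)²) / (p (p + 2))` and
`Var(uᵀ A u) = 2 (p ‖A‖_F² - (tr A)²) / (p² (p + 2))`. -/
theorem second_moment_quadratic_form_uniform_sphere {p : ℕ} (hp : 0 < p)
    {Ω : Type*} [MeasurableSpace Ω] (P : Measure Ω) [IsProbabilityMeasure P]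
    (u : Ω → Fin p → ℝ) (hu : Measurable u)
    (hsphere : ∀ᵐ ω ∂P, ∑ i, (u ω i) ^ 2 = 1)
    (hrot : ∀ O : Matrix.orthogonalGroup (Fin p) ℝ,
      Measure.map (fun ω => (O : Matrix (Fin p) (Fin p) ℝ).mulVec (u ω)) P
        = Measure.map u P)
    (A : Matrix (Fin p) (Fin p) ℝ) (hA : A.IsSymm) :
    (∫ ω, ((u ω) ⬝ᵥ A.mulVec (u ω)) ^ 2 ∂P
        = (2 * ∑ i, ∑ j, (A i j) ^ 2 + A.trace ^ 2) / (p * (p + 2)))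
    ∧ (∫ ω, ((u ω) ⬝ᵥ A.mulVec (u ω)) ^ 2 ∂P
          - (∫ ω, (u ω) ⬝ᵥ A.mulVec (u ω) ∂P) ^ 2
        = 2 * ((p : ℝ) * ∑ i, ∑ j, (A i j) ^ 2 - A.trace ^ 2) / (p ^ 2 * (p + 2))) :=
  second_moment_quadratic_form_uniform_sphere_general P u hu hsphere hrot A hA
end
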